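/- Let n ≥ 1 and let A ∈ M_n(ℂ) be an upper triangular matrix such that (a) all diagonal entries of A are equal, and (b) every entry A_{i,i+1} on the first superdiagonal is nonzero. Then for an upper triangular matrix A' ∈ M_n(ℂ), the following are equivalent: (1) ‖f(A_i)‖ = ‖f(A'_i)‖ for every polynomial f ∈ ℂ[t] and every 1 ≤ i ≤ n, where X_i denotes the leading i×i principal submatrix of X; (2) A' = W*AW for some diagonal unitary matrix W ∈ M_n(ℂ). -/

import Mathlib

open Polynomial Matrix

/-- The operator norm of a complex matrix, i.e. its norm as a linear map on the
Euclidean space `ℂᵏ`; it equals `√(spr(X*X))`, the largest singular value. -/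
noncomputable def opNorm {k : ℕ} (X : Matrix (Fin k) (Fin k) ℂ) : ℝ :=
  ‖Matrix.toEuclideanCLM (𝕜 := ℂ) X‖

/-- The leading `k × k` principal submatrix of an `n × n` matrix. -/
def leadingSubmatrix {n : ℕ} (X : Matrix (Fin n) (Fin n) ℂ) (k : ℕ) (hk : k ≤ n) :
    Matrix (Fin k) (Fin k) ℂ :=
  X.submatrix (Fin.castLE hk) (Fin.castLE hk)

/-!
Subtracting the common diagonal entry `c` makes `A - c` strictly upper triangular with nonzero
superdiagonal, and the norm condition makes `A' - c` nilpotent, hence strictly upper triangular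
too. The diagonal unitary is built column by column, by induction on the size of the leading
blocks. After conjugating by the unitary found for the leading `N × N` blocks, `B = A_{N+1} - c`
and `B' = A'_{N+1} - c` differ only in their last columns `b` and `b'`. The powers `B ^ N` and
`B' ^ N` vanish outside the entry `(0, N)`, where they equal `η` and `η'` with `|η| = |η'|`.
Since `B ^ k + z B ^ N` agrees with `B ^ k` off the last column, its squared norm lies between
the squared norm of its last column and that plus `‖B ^ k‖²`; comparing with the same bounds
for `B'`, the terms quadratic in `z` cancel and those linear in `z` force
`conj η (B ^ k)_{0N} = conj η' (B' ^ k)_{0N}` for every `k`, i.e.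
`(B ^ k (conj η b - conj η' b'))_0 = 0`. As row `0` of `B ^ k` starts with exactly `k` zeros,
these rows separate vectors, so `b' = (conj η / conj η') b`.
-/

open scoped InnerProductSpace ComplexConjugate Matrix.Norms.L2Operator

theorem RCLike.eq_zero_of_forall_re_mul_le {𝕜 : Type*} [RCLike 𝕜] {w : 𝕜} {K : ℝ}
    (h : ∀ z : 𝕜, re (z * w) ≤ K) : w = 0 := by
  by_contra hw
  have hpos : 0 < ‖w‖ ^ 2 := by positivity
  have hz := h (((|K| + 1) / ‖w‖ ^ 2 : ℝ) * conj w)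
  rw [mul_assoc, RCLike.conj_mul, ← RCLike.ofReal_pow, ← RCLike.ofReal_mul, RCLike.ofReal_re,
    div_mul_cancel₀ _ hpos.ne'] at hz
  linarith [le_abs_self K]

namespace ContinuousLinearMap

variable {𝕜 E F : Type*} [RCLike 𝕜] [NormedAddCommGroup E] [InnerProductSpace 𝕜 E]
  [NormedAddCommGroup F] {u : E}

theorem sq_opNorm_le_of_eq_on_orthogonal [NormedSpace 𝕜 F] (T S : E →L[𝕜] F) (hu : ‖u‖ = 1)
    (h : ∀ x, ⟪u, x⟫_𝕜 = 0 → T x = S x) : ‖T‖ ^ 2 ≤ ‖S‖ ^ 2 + ‖T u‖ ^ 2 := by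
  have hbound (x : E) : ‖T x‖ ≤ √(‖S‖ ^ 2 + ‖T u‖ ^ 2) * ‖x‖ := by
    set c := ⟪u, x⟫_𝕜
    set y := x - c • u
    have hy : ⟪u, y⟫_𝕜 = 0 := by
      simp [y, c, inner_sub_right, inner_smul_right, inner_self_eq_norm_sq_to_K, hu]
    have hx : ‖x‖ ^ 2 = ‖y‖ ^ 2 + ‖c‖ ^ 2 := by
      have hyu : ⟪y, c • u⟫_𝕜 = 0 := by rw [inner_smul_right, ← inner_conj_symm, hy]; simp
      have hxy : y + c • u = x := sub_add_cancel x _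
      have := norm_add_sq (𝕜 := 𝕜) y (c • u)
      rwa [hxy, hyu, map_zero, mul_zero, add_zero, norm_smul, hu, mul_one] at this
    have hTx : T x = S y + c • T u := by rw [← h y hy, ← map_smul, ← map_add, sub_add_cancel]
    calc ‖T x‖ ≤ ‖S y‖ + ‖c • T u‖ := hTx ▸ norm_add_le _ _
      _ ≤ ‖S‖ * ‖y‖ + ‖c‖ * ‖T u‖ := by rw [norm_smul]; gcongr; exact S.le_opNorm y
      _ ≤ √(‖S‖ ^ 2 + ‖T u‖ ^ 2) * √(‖y‖ ^ 2 + ‖c‖ ^ 2) := by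
          rw [← Real.sqrt_mul (by positivity)]
          apply Real.le_sqrt_of_sq_le
          nlinarith [sq_nonneg (‖S‖ * ‖c‖ - ‖T u‖ * ‖y‖)]
      _ = √(‖S‖ ^ 2 + ‖T u‖ ^ 2) * ‖x‖ := by rw [← hx, Real.sqrt_sq (norm_nonneg x)]
  calc ‖T‖ ^ 2 ≤ √(‖S‖ ^ 2 + ‖T u‖ ^ 2) ^ 2 :=
        pow_le_pow_left₀ (norm_nonneg _) (T.opNorm_le_bound (Real.sqrt_nonneg _) hbound) 2
    _ = ‖S‖ ^ 2 + ‖T u‖ ^ 2 := Real.sq_sqrt (by positivity)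

theorem opNorm_eq_norm_apply_of_eq_zero_on_orthogonal [NormedSpace 𝕜 F] (R : E →L[𝕜] F)
    (hu : ‖u‖ = 1) (h : ∀ x, ⟪u, x⟫_𝕜 = 0 → R x = 0) : ‖R‖ = ‖R u‖ := by
  refine le_antisymm ?_ (by simpa [hu] using R.le_opNorm u)
  have := R.sq_opNorm_le_of_eq_on_orthogonal 0 hu (by simpa using h)
  rw [norm_zero, zero_pow two_ne_zero, zero_add] at this
  exact (pow_le_pow_iff_left₀ (norm_nonneg _) (norm_nonneg _) two_ne_zero).mp this

theorem inner_apply_eq_of_forall_norm_add_smul_eq [InnerProductSpace 𝕜 F]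
    {T T' R R' : E →L[𝕜] F} (hu : ‖u‖ = 1) (hR' : ∀ x, ⟪u, x⟫_𝕜 = 0 → R' x = 0)
    (hRu : ‖R u‖ = ‖R' u‖) (h : ∀ z : 𝕜, ‖T + z • R‖ = ‖T' + z • R'‖) :
    ⟪T u, R u⟫_𝕜 = ⟪T' u, R' u⟫_𝕜 := by
  rw [← sub_eq_zero]
  refine RCLike.eq_zero_of_forall_re_mul_le (K := (‖T'‖ ^ 2 + ‖T' u‖ ^ 2 - ‖T u‖ ^ 2) / 2)
    fun z => ?_
  have hlow : ‖T u + z • R u‖ ^ 2 ≤ ‖T' + z • R'‖ ^ 2 := by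
    rw [← h z]
    gcongr
    simpa [hu] using (T + z • R).le_opNorm u
  have hup := (T' + z • R').sq_opNorm_le_of_eq_on_orthogonal T' hu
    (fun x hx => by simp [hR' x hx])
  have e := norm_add_sq (𝕜 := 𝕜) (T u) (z • R u)
  have e' := norm_add_sq (𝕜 := 𝕜) (T' u) (z • R' u)
  simp only [_root_.add_apply, _root_.smul_apply, inner_smul_right, norm_smul, hRu] at e e' hup
  rw [mul_sub, map_sub]
  linarith

end ContinuousLinearMap

theorem Polynomial.aeval_star_mul_mul_of_mem_unitary {R A : Type*} [CommSemiring R] [Semiring A]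
    [StarMul A] [Algebra R A] {U : A} (hU : U ∈ unitary A) (x : A) (f : R[X]) :
    aeval (star U * x * U) f = star U * aeval x f * U := by
  simpa using aeval_algHom_apply (Unitary.conjStarAlgAut R A (star ⟨U, hU⟩)) x f

theorem CStarRing.norm_aeval_star_mul_mul_of_mem_unitary {R E : Type*} [CommSemiring R]
    [NormedRing E] [StarRing E] [CStarRing E] [Algebra R E] {U : E} (hU : U ∈ unitary E) (x : E)
    (f : R[X]) : ‖aeval (star U * x * U) f‖ = ‖aeval x f‖ := by
  rw [aeval_star_mul_mul_of_mem_unitary hU, norm_mul_mem_unitary _ hU,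
    norm_mem_unitary_mul _ (Unitary.star_mem hU)]

namespace Matrix

section Diagonal

variable {n α : Type*} [Fintype n] [DecidableEq n]

theorem star_diagonal_mul_mul_diagonal_apply [Semiring α] [StarRing α] (d : n → α)
    (M : Matrix n n α) (i j : n) :
    (star (diagonal d) * M * diagonal d) i j = star (d i) * M i j * d j := by
  rw [star_eq_conjTranspose, diagonal_conjTranspose, mul_diagonal, diagonal_mul]
  rfl

theorem diagonal_mem_unitaryGroup_iff {𝕜 : Type*} [RCLike 𝕜] {d : n → 𝕜} :
    diagonal d ∈ unitaryGroup n 𝕜 ↔ ∀ i, ‖d i‖ = 1 := by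
  rw [mem_unitaryGroup_iff, star_eq_conjTranspose, diagonal_conjTranspose, diagonal_mul_diagonal,
    ← diagonal_one, diagonal_eq_diagonal_iff]
  refine forall_congr' fun i => ?_
  rw [Pi.star_apply, RCLike.star_def, RCLike.mul_conj, ← RCLike.ofReal_pow, ← RCLike.ofReal_one,
    RCLike.ofReal_inj, pow_eq_one_iff_of_nonneg (norm_nonneg _) two_ne_zero]

end Diagonal

variable {m R : Type*}

def IsStrictUpperTriangular [LE m] [Zero R] (M : Matrix m m R) : Prop :=
  ∀ ⦃i j⦄, j ≤ i → M i j = 0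

theorem IsUpperTriangular.pow_apply_self [Fintype m] [LinearOrder m] [DecidableEq m] [Semiring R]
    {M : Matrix m m R} (hM : M.IsUpperTriangular) (k : ℕ) (i : m) : (M ^ k) i i = M i i ^ k := by
  induction k with
  | zero => simp
  | succ k ih =>
    rw [pow_succ, mul_apply, Finset.sum_eq_single i, ih, pow_succ]
    · intro t _ hti
      rcases lt_or_gt_of_ne hti with h | h
      · rw [hM.pow k h, zero_mul]
      · rw [hM h, mul_zero]
    · simp

theorem IsUpperTriangular.isStrictUpperTriangular_of_isNilpotent [Fintype m] [LinearOrder m]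
    [DecidableEq m] [Semiring R] [IsReduced R] {M : Matrix m m R} (hM : M.IsUpperTriangular)
    (hnil : IsNilpotent M) : M.IsStrictUpperTriangular := by
  intro i j hji
  rcases hji.lt_or_eq with h | rfl
  · exact hM h
  · obtain ⟨k, hk⟩ := hnil
    exact IsNilpotent.eq_zero ⟨k, by rw [← hM.pow_apply_self, hk, zero_apply]⟩

theorem IsUpperTriangular.sub_smul_one [Preorder m] [DecidableEq m] [Ring R]
    {M : Matrix m m R} (hM : M.IsUpperTriangular) (c : R) : (M - c • 1).IsUpperTriangular :=
  fun i j h => by simp [hM h, one_apply_ne (show i ≠ j from ne_of_gt h)]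

theorem IsUpperTriangular.isStrictUpperTriangular_sub_smul_one [PartialOrder m] [DecidableEq m]
    [Ring R] {M : Matrix m m R} {c : R} (hM : M.IsUpperTriangular) (hdiag : ∀ i, M i i = c) :
    (M - c • 1).IsStrictUpperTriangular := fun i j h => by
  rcases h.lt_or_eq with h | rfl
  · exact hM.sub_smul_one c h
  · simp [hdiag]

namespace IsStrictUpperTriangular

section Semiring

variable [Semiring R] {K N : ℕ}

theorem pow_apply_eq_zero {B : Matrix (Fin K) (Fin K) R} (hB : B.IsStrictUpperTriangular) (k : ℕ)
    {i j : Fin K} (h : (j : ℕ) < i + k) : (B ^ k) i j = 0 := by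
  induction k generalizing j with
  | zero => exact one_apply_ne (by omega)
  | succ k ih =>
    rw [pow_succ, mul_apply]
    refine Finset.sum_eq_zero fun t _ => ?_
    by_cases ht : (t : ℕ) < i + k
    · rw [ih ht, zero_mul]
    · rw [hB (show j ≤ t by omega), mul_zero]

theorem pow_eq_zero {B : Matrix (Fin K) (Fin K) R} (hB : B.IsStrictUpperTriangular) : B ^ K = 0 :=
  ext fun _ _ => hB.pow_apply_eq_zero K (by omega)

theorem pow_apply_ne_zero [NoZeroDivisors R] [Nontrivial R] {B : Matrix (Fin K) (Fin K) R}
    (hB : B.IsStrictUpperTriangular) (hsup : ∀ i j : Fin K, (i : ℕ) + 1 = j → B i j ≠ 0)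
    (k : ℕ) {i j : Fin K} (h : (i : ℕ) + k = j) : (B ^ k) i j ≠ 0 := by
  induction k generalizing j with
  | zero => rw [show j = i by omega, pow_zero, one_apply_eq]; exact one_ne_zero
  | succ k ih =>
    set t : Fin K := ⟨i + k, by omega⟩
    rw [pow_succ, mul_apply, Finset.sum_eq_single t]
    · exact mul_ne_zero (ih rfl) (hsup t j (by simp [t]; omega))
    · intro s _ hst
      by_cases hs : (s : ℕ) < i + k
      · rw [hB.pow_apply_eq_zero k hs, zero_mul]
      · rw [hB (show j ≤ s by simp [t, Fin.ext_iff] at hst; omega), mul_zero]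
    · simp

theorem eq_zero_of_forall_pow_mulVec_apply_zero [NoZeroDivisors R] [Nontrivial R]
    {B : Matrix (Fin (N + 1)) (Fin (N + 1)) R} (hB : B.IsStrictUpperTriangular)
    (hsup : ∀ i j : Fin (N + 1), (i : ℕ) + 1 = j → B i j ≠ 0) {x : Fin (N + 1) → R}
    (hx : ∀ k, (B ^ k *ᵥ x) 0 = 0) : x = 0 := by
  classical
  by_contra hne
  obtain ⟨r, hr, hmax⟩ := (Finset.univ.filter (x · ≠ 0)).exists_max_image id
    (by simpa [Finset.filter_nonempty_iff, funext_iff] using hne)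
  simp only [Finset.mem_filter, Finset.mem_univ, true_and, id] at hr hmax
  apply mul_ne_zero (hB.pow_apply_ne_zero hsup r (i := 0) (j := r) (by simp)) hr
  rw [← hx r, mulVec, dotProduct, Finset.sum_eq_single r]
  · intro s _ hsr
    rcases lt_or_gt_of_ne hsr with h | h
    · rw [hB.pow_apply_eq_zero r (by simpa using h), zero_mul]
    · rw [not_not.mp (mt (hmax s) (not_le.mpr h)), mul_zero]
  · simp

theorem pow_mulVec_eq_of_eq_off_last {B B' : Matrix (Fin (N + 1)) (Fin (N + 1)) R}
    (hB : B.IsStrictUpperTriangular) (hcol : ∀ i j, j ≠ Fin.last N → B' i j = B i j) (k : ℕ)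
    {x : Fin (N + 1) → R} (hx : x (Fin.last N) = 0) : B' ^ k *ᵥ x = B ^ k *ᵥ x := by
  induction k generalizing x with
  | zero => simp
  | succ k ih =>
    have hB'x : B' *ᵥ x = B *ᵥ x := by
      ext i
      simp only [mulVec, dotProduct]
      refine Finset.sum_congr rfl fun j _ => ?_
      by_cases hj : j = Fin.last N
      · simp [hj, hx]
      · rw [hcol i j hj]
    have hBx : (B *ᵥ x) (Fin.last N) = 0 := by simp [mulVec, dotProduct, hB (Fin.le_last _)]
    rw [pow_succ, pow_succ, ← mulVec_mulVec, ← mulVec_mulVec, hB'x, ih hBx]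

theorem pow_mulVec_eq_single {B : Matrix (Fin (N + 1)) (Fin (N + 1)) R}
    (hB : B.IsStrictUpperTriangular) (x : Fin (N + 1) → R) :
    B ^ N *ᵥ x = Pi.single 0 ((B ^ N) 0 (Fin.last N) * x (Fin.last N)) := by
  ext i
  rw [mulVec, dotProduct]
  rcases eq_or_ne i 0 with rfl | hi
  · rw [Pi.single_eq_same, Finset.sum_eq_single (Fin.last N)]
    · intro j _ hj
      rw [hB.pow_apply_eq_zero N (by rw [Fin.val_zero, zero_add]; exact Fin.val_lt_last hj),
        zero_mul]
    · simp
  · have hi' : 0 < (i : ℕ) := Nat.pos_of_ne_zero fun h => hi (Fin.ext h)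
    rw [Pi.single_eq_of_ne hi]
    exact Finset.sum_eq_zero fun j _ => by rw [hB.pow_apply_eq_zero N (by omega), zero_mul]

end Semiring

variable {N : ℕ}

theorem eq_star_diagonal_mul_mul_diagonal_of_last_col_eq_smul {R : Type*} [CommSemiring R]
    [StarRing R] {B B' : Matrix (Fin (N + 1)) (Fin (N + 1)) R}
    (hB : B.IsStrictUpperTriangular) (hB' : B'.IsStrictUpperTriangular)
    (hcol : ∀ i j, j ≠ Fin.last N → B' i j = B i j) {u : R}
    (hlast : ∀ i, B' i (Fin.last N) = u * B i (Fin.last N)) :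
    B' = star (diagonal (Function.update 1 (Fin.last N) u)) * B *
      diagonal (Function.update 1 (Fin.last N) u) := by
  ext i j
  rw [star_diagonal_mul_mul_diagonal_apply]
  rcases eq_or_ne i (Fin.last N) with rfl | hi
  · simp [hB' (Fin.le_last j), hB (Fin.le_last j)]
  rcases eq_or_ne j (Fin.last N) with rfl | hj
  · simp [Function.update_of_ne hi, hlast i, mul_comm]
  · simp [Function.update_of_ne hi, Function.update_of_ne hj, hcol i j hj]

theorem toEuclideanCLM_pow_apply {B : Matrix (Fin (N + 1)) (Fin (N + 1)) ℂ}
    (hB : B.IsStrictUpperTriangular) (x : EuclideanSpace ℂ (Fin (N + 1))) :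
    toEuclideanCLM (𝕜 := ℂ) (B ^ N) x =
      EuclideanSpace.single 0 ((B ^ N) 0 (Fin.last N) * x (Fin.last N)) := by
  ext i
  rw [ofLp_toEuclideanCLM, hB.pow_mulVec_eq_single]
  simp [Pi.single_apply]

theorem toEuclideanCLM_pow_apply_eq_zero {B : Matrix (Fin (N + 1)) (Fin (N + 1)) ℂ}
    (hB : B.IsStrictUpperTriangular) (x : EuclideanSpace ℂ (Fin (N + 1)))
    (hx : ⟪EuclideanSpace.single (Fin.last N) 1, x⟫_ℂ = 0) :
    toEuclideanCLM (𝕜 := ℂ) (B ^ N) x = 0 := by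
  rw [EuclideanSpace.inner_single_left, map_one, one_mul] at hx
  rw [hB.toEuclideanCLM_pow_apply, hx, mul_zero]
  simp

theorem norm_pow_apply_zero_last_eq {B B' : Matrix (Fin (N + 1)) (Fin (N + 1)) ℂ}
    (hB : B.IsStrictUpperTriangular) (hB' : B'.IsStrictUpperTriangular)
    (h : ‖B ^ N‖ = ‖B' ^ N‖) : ‖(B ^ N) 0 (Fin.last N)‖ = ‖(B' ^ N) 0 (Fin.last N)‖ := by
  have he : ‖EuclideanSpace.single (Fin.last N) (1 : ℂ)‖ = 1 := by simp
  rw [cstar_norm_def, cstar_norm_def,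
    (toEuclideanCLM (𝕜 := ℂ) (B ^ N)).opNorm_eq_norm_apply_of_eq_zero_on_orthogonal he
      hB.toEuclideanCLM_pow_apply_eq_zero,
    (toEuclideanCLM (𝕜 := ℂ) (B' ^ N)).opNorm_eq_norm_apply_of_eq_zero_on_orthogonal he
      hB'.toEuclideanCLM_pow_apply_eq_zero,
    hB.toEuclideanCLM_pow_apply, hB'.toEuclideanCLM_pow_apply] at h
  simpa using h

theorem pow_apply_mul_conj_eq_of_norm_aeval_eq {B B' : Matrix (Fin (N + 1)) (Fin (N + 1)) ℂ}
    (hB : B.IsStrictUpperTriangular) (hB' : B'.IsStrictUpperTriangular)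
    (hnorm : ∀ f : ℂ[X], ‖aeval B f‖ = ‖aeval B' f‖) (k : ℕ) :
    (B ^ k) 0 (Fin.last N) * conj ((B ^ N) 0 (Fin.last N)) =
      (B' ^ k) 0 (Fin.last N) * conj ((B' ^ N) 0 (Fin.last N)) := by
  have hη := hB.norm_pow_apply_zero_last_eq hB' (by simpa using hnorm (X ^ N))
  have h := ContinuousLinearMap.inner_apply_eq_of_forall_norm_add_smul_eq
    (T := toEuclideanCLM (𝕜 := ℂ) (B ^ k)) (T' := toEuclideanCLM (𝕜 := ℂ) (B' ^ k))
    (R := toEuclideanCLM (𝕜 := ℂ) (B ^ N)) (R' := toEuclideanCLM (𝕜 := ℂ) (B' ^ N))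
    (u := EuclideanSpace.single (Fin.last N) 1) (by simp) hB'.toEuclideanCLM_pow_apply_eq_zero
    (by rw [hB.toEuclideanCLM_pow_apply, hB'.toEuclideanCLM_pow_apply]; simpa using hη)
    (fun z => by
      have h := hnorm (X ^ k + C z * X ^ N)
      simp only [map_add, map_mul, aeval_C, map_pow, aeval_X, ← Algebra.smul_def] at h
      rwa [cstar_norm_def, cstar_norm_def, map_add, map_smul, map_add, map_smul] at h)
  rw [hB.toEuclideanCLM_pow_apply, hB'.toEuclideanCLM_pow_apply,
    EuclideanSpace.inner_single_right, EuclideanSpace.inner_single_right] at h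
  simp only [← PiLp.toLp_single, toEuclideanCLM_toLp, PiLp.toLp_apply] at h
  simpa [mul_comm] using congrArg conj h

theorem exists_last_col_eq_smul_of_norm_aeval_eq {B B' : Matrix (Fin (N + 1)) (Fin (N + 1)) ℂ}
    (hB : B.IsStrictUpperTriangular) (hB' : B'.IsStrictUpperTriangular)
    (hsup : ∀ i j : Fin (N + 1), (i : ℕ) + 1 = j → B i j ≠ 0)
    (hcol : ∀ i j, j ≠ Fin.last N → B' i j = B i j)
    (hnorm : ∀ f : ℂ[X], ‖aeval B f‖ = ‖aeval B' f‖) :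
    ∃ u : ℂ, ‖u‖ = 1 ∧ ∀ i, B' i (Fin.last N) = u * B i (Fin.last N) := by
  set l := Fin.last N
  set η := (B ^ N) 0 l
  set η' := (B' ^ N) 0 l
  have hη : η ≠ 0 := hB.pow_apply_ne_zero hsup N (by simp [l])
  have hηη' : ‖η‖ = ‖η'‖ := hB.norm_pow_apply_zero_last_eq hB' (by simpa using hnorm (X ^ N))
  have hη' : η' ≠ 0 := norm_ne_zero_iff.mp (hηη' ▸ norm_ne_zero_iff.mpr hη)
  set x : Fin (N + 1) → ℂ := conj η • (B *ᵥ Pi.single l 1) - conj η' • (B' *ᵥ Pi.single l 1)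
  have hx (k : ℕ) : (B ^ k *ᵥ x) 0 = 0 := by
    have hB'l : (B' *ᵥ Pi.single l 1) l = 0 := by simp [hB' le_rfl]
    rw [mulVec_sub, mulVec_smul, mulVec_smul, ← hB.pow_mulVec_eq_of_eq_off_last hcol k hB'l,
      mulVec_mulVec, mulVec_mulVec, ← pow_succ, ← pow_succ]
    simp only [Pi.sub_apply, Pi.smul_apply, mulVec_single_one, col_apply, smul_eq_mul]
    linear_combination hB.pow_apply_mul_conj_eq_of_norm_aeval_eq hB' hnorm (k + 1)
  refine ⟨conj η / conj η', by simp [hηη', hη'], fun i => ?_⟩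
  have hi := congrFun (hB.eq_zero_of_forall_pow_mulVec_apply_zero hsup hx) i
  simp only [x, Pi.sub_apply, Pi.smul_apply, mulVec_single_one, col_apply, smul_eq_mul,
    Pi.zero_apply] at hi
  rw [div_mul_eq_mul_div, eq_div_iff (by simpa using hη')]
  linear_combination -hi

end IsStrictUpperTriangular

end Matrix

theorem opNorm_eq_norm {k : ℕ} (X : Matrix (Fin k) (Fin k) ℂ) : opNorm X = ‖X‖ := rfl

section leadingSubmatrix

variable {n k : ℕ}

theorem leadingSubmatrix_self (X : Matrix (Fin n) (Fin n) ℂ) (h : n ≤ n) :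
    leadingSubmatrix X n h = X := rfl

theorem leadingSubmatrix_leadingSubmatrix {m : ℕ} (X : Matrix (Fin n) (Fin n) ℂ) (hk : k ≤ m)
    (hm : m ≤ n) :
    leadingSubmatrix (leadingSubmatrix X m hm) k hk = leadingSubmatrix X k (hk.trans hm) := rfl

theorem leadingSubmatrix_sub_smul_one (X : Matrix (Fin n) (Fin n) ℂ) (c : ℂ) (hk : k ≤ n) :
    leadingSubmatrix (X - c • 1) k hk = leadingSubmatrix X k hk - c • 1 := by
  ext i j
  simp [leadingSubmatrix, one_apply, Fin.castLE_inj]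

theorem leadingSubmatrix_star_diagonal_mul_mul_diagonal (X : Matrix (Fin n) (Fin n) ℂ)
    (d : Fin n → ℂ) (hk : k ≤ n) :
    leadingSubmatrix (star (diagonal d) * X * diagonal d) k hk =
      star (diagonal (d ∘ Fin.castLE hk)) * leadingSubmatrix X k hk *
        diagonal (d ∘ Fin.castLE hk) := by
  ext i j
  simp only [leadingSubmatrix, submatrix_apply, star_diagonal_mul_mul_diagonal_apply,
    Function.comp_apply]

theorem isStrictUpperTriangular_leadingSubmatrix {X : Matrix (Fin n) (Fin n) ℂ}
    (hX : X.IsStrictUpperTriangular) (hk : k ≤ n) :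
    (leadingSubmatrix X k hk).IsStrictUpperTriangular :=
  fun _ _ h => hX ((Fin.castLE_le_castLE_iff hk).mpr h)

end leadingSubmatrix

theorem norm_aeval_sub_smul_one_eq {k : ℕ} {M M' : Matrix (Fin k) (Fin k) ℂ}
    (h : ∀ f : ℂ[X], ‖aeval M f‖ = ‖aeval M' f‖) (c : ℂ) (f : ℂ[X]) :
    ‖aeval (M - c • 1) f‖ = ‖aeval (M' - c • 1) f‖ := by
  have hshift (P : Matrix (Fin k) (Fin k) ℂ) :
      aeval (P - c • 1) f = aeval P (f.comp (X - C c)) := by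
    simp [aeval_comp, Algebra.algebraMap_eq_smul_one]
  rw [hshift, hshift]
  exact h _

theorem Matrix.IsStrictUpperTriangular.exists_diagonal_of_leadingSubmatrix_eq {N : ℕ}
    {B B' : Matrix (Fin (N + 1)) (Fin (N + 1)) ℂ} (hB : B.IsStrictUpperTriangular)
    (hB' : B'.IsStrictUpperTriangular) (hsup : ∀ i j : Fin (N + 1), (i : ℕ) + 1 = j → B i j ≠ 0)
    (hnorm : ∀ f : ℂ[X], ‖aeval B f‖ = ‖aeval B' f‖) {d : Fin N → ℂ} (hd : ∀ i, ‖d i‖ = 1)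
    (hdB : leadingSubmatrix B' N N.le_succ =
      star (diagonal d) * leadingSubmatrix B N N.le_succ * diagonal d) :
    ∃ d' : Fin (N + 1) → ℂ, (∀ i, ‖d' i‖ = 1) ∧ B' = star (diagonal d') * B * diagonal d' := by
  set v : Fin (N + 1) → ℂ := Fin.snoc d 1
  have hv (i : Fin (N + 1)) : ‖v i‖ = 1 := by
    induction i using Fin.lastCases with
    | last => simp [v]
    | cast i => simp [v, hd i]
  have hv0 (i : Fin (N + 1)) : v i ≠ 0 := norm_ne_zero_iff.mp ((hv i).trans_ne one_ne_zero)
  set C := star (diagonal v) * B * diagonal v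
  have hCapply (i j : Fin (N + 1)) : C i j = star (v i) * B i j * v j :=
    star_diagonal_mul_mul_diagonal_apply v B i j
  have hC : C.IsStrictUpperTriangular := fun i j h => by rw [hCapply, hB h, mul_zero, zero_mul]
  have hsupC (i j : Fin (N + 1)) (h : (i : ℕ) + 1 = j) : C i j ≠ 0 := by
    rw [hCapply]
    exact mul_ne_zero (mul_ne_zero (star_ne_zero.mpr (hv0 i)) (hsup i j h)) (hv0 j)
  have hcol (i j : Fin (N + 1)) (hj : j ≠ Fin.last N) : B' i j = C i j := by
    obtain ⟨j, rfl⟩ := Fin.exists_castSucc_eq.mpr hj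
    induction i using Fin.lastCases with
    | last => rw [hB' (Fin.le_last _), hC (Fin.le_last _)]
    | cast i =>
      have hij := congrFun (congrFun hdB i) j
      rw [star_diagonal_mul_mul_diagonal_apply] at hij
      simp only [hCapply, v, Fin.snoc_castSucc]
      exact hij
  have hnormC (f : ℂ[X]) : ‖aeval C f‖ = ‖aeval B' f‖ := by
    rw [CStarRing.norm_aeval_star_mul_mul_of_mem_unitary (diagonal_mem_unitaryGroup_iff.mpr hv)]
    exact hnorm f
  obtain ⟨u, hu, hlast⟩ := hC.exists_last_col_eq_smul_of_norm_aeval_eq hB' hsupC hcol hnormC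
  refine ⟨fun i => v i * Function.update (1 : Fin (N + 1) → ℂ) (Fin.last N) u i, fun i => ?_, ?_⟩
  · rcases eq_or_ne i (Fin.last N) with rfl | hi
    · simp [hv, hu]
    · simp [hv, Function.update_of_ne hi]
  · rw [hC.eq_star_diagonal_mul_mul_diagonal_of_last_col_eq_smul hB' hcol hlast,
      ← diagonal_mul_diagonal]
    simp only [C, star_mul, mul_assoc]

theorem Matrix.IsStrictUpperTriangular.exists_diagonal_of_norm_aeval_leadingSubmatrix_eq :
    ∀ {N : ℕ} {B B' : Matrix (Fin N) (Fin N) ℂ}, B.IsStrictUpperTriangular →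
      B'.IsStrictUpperTriangular → (∀ i j : Fin N, (i : ℕ) + 1 = j → B i j ≠ 0) →
      (∀ (k : ℕ) (_ : 1 ≤ k) (hkN : k ≤ N) (f : ℂ[X]),
        ‖aeval (leadingSubmatrix B k hkN) f‖ = ‖aeval (leadingSubmatrix B' k hkN) f‖) →
      ∃ d : Fin N → ℂ, (∀ i, ‖d i‖ = 1) ∧ B' = star (diagonal d) * B * diagonal d
  | 0, B, B', _, _, _, _ => ⟨1, by simp, Subsingleton.elim _ _⟩
  | N + 1, B, B', hB, hB', hsup, hnorm => by
    obtain ⟨d, hd, hdB⟩ := exists_diagonal_of_norm_aeval_leadingSubmatrix_eq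
      (isStrictUpperTriangular_leadingSubmatrix hB N.le_succ)
      (isStrictUpperTriangular_leadingSubmatrix hB' N.le_succ)
      (fun i j h => hsup _ _ h) (fun k hk1 hkN f => by
        simpa only [leadingSubmatrix_leadingSubmatrix] using hnorm k hk1 (hkN.trans N.le_succ) f)
    exact hB.exists_diagonal_of_leadingSubmatrix_eq hB' hsup
      (by simpa only [leadingSubmatrix_self] using hnorm (N + 1) N.succ_pos le_rfl) hd hdB

/-- Let `A` be upper triangular with constant diagonal and nonzero first superdiagonal.
For an upper triangular `A'`, the following are equivalent: (1) the leading principal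
submatrices of `A` and `A'` satisfy `‖f(A_i)‖ = ‖f(A'_i)‖` for all polynomials `f`
and all `1 ≤ i ≤ n`; (2) `A' = W* A W` for some diagonal unitary `W`. -/
theorem unitary_similarity_of_leading_submatrix_norms
    (n : ℕ) (hn : 1 ≤ n)
    (A A' : Matrix (Fin n) (Fin n) ℂ)
    (hA_triangular : ∀ i j : Fin n, (j : ℕ) < (i : ℕ) → A i j = 0)
    (hA_diag : ∀ i k : Fin n, A i i = A k k)
    (hA_super : ∀ i j : Fin n, (i : ℕ) + 1 = (j : ℕ) → A i j ≠ 0)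
    (hA'_triangular : ∀ i j : Fin n, (j : ℕ) < (i : ℕ) → A' i j = 0) :
    (∀ (k : ℕ) (hk1 : 1 ≤ k) (hkn : k ≤ n) (f : Polynomial ℂ),
        opNorm (aeval (leadingSubmatrix A k hkn) f) =
          opNorm (aeval (leadingSubmatrix A' k hkn) f)) ↔
    (∃ W : Matrix (Fin n) (Fin n) ℂ, W ∈ Matrix.unitaryGroup (Fin n) ℂ ∧ W.IsDiag ∧
        A' = star W * A * W) := by
  set c := A ⟨0, hn⟩ ⟨0, hn⟩
  have hAc : (A - c • 1).IsStrictUpperTriangular :=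
    IsUpperTriangular.isStrictUpperTriangular_sub_smul_one (fun i j h => hA_triangular i j h)
      fun i => hA_diag i _
  constructor
  · intro h
    have hshift (k : ℕ) (hk1 : 1 ≤ k) (hkn : k ≤ n) (f : ℂ[X]) :
        ‖aeval (leadingSubmatrix (A - c • 1) k hkn) f‖ =
          ‖aeval (leadingSubmatrix (A' - c • 1) k hkn) f‖ := by
      simpa only [leadingSubmatrix_sub_smul_one] using norm_aeval_sub_smul_one_eq (h k hk1 hkn) c f
    have hA'c : (A' - c • 1).IsStrictUpperTriangular :=
      IsUpperTriangular.isStrictUpperTriangular_of_isNilpotent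
        (IsUpperTriangular.sub_smul_one (fun i j h => hA'_triangular i j h) c)
        ⟨n, norm_eq_zero.mp <| by
          simpa [leadingSubmatrix_self, hAc.pow_eq_zero] using (hshift n hn le_rfl (X ^ n)).symm⟩
    obtain ⟨d, hd, hdA⟩ := hAc.exists_diagonal_of_norm_aeval_leadingSubmatrix_eq hA'c
      (fun i j h => by simpa [one_apply_ne (show i ≠ j by omega)] using hA_super i j h) hshift
    refine ⟨diagonal d, diagonal_mem_unitaryGroup_iff.mpr hd, isDiag_diagonal d, ?_⟩
    have hD : star (diagonal d) * diagonal d = 1 :=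
      mem_unitaryGroup_iff'.mp (diagonal_mem_unitaryGroup_iff.mpr hd)
    rwa [mul_sub, sub_mul, mul_smul_comm, smul_mul_assoc, mul_one, hD, sub_left_inj] at hdA
  · rintro ⟨W, hW, hWdiag, rfl⟩ k - hkn f
    rw [← hWdiag.diagonal_diag] at hW ⊢
    rw [opNorm_eq_norm, opNorm_eq_norm, leadingSubmatrix_star_diagonal_mul_mul_diagonal,
      CStarRing.norm_aeval_star_mul_mul_of_mem_unitary]
    exact diagonal_mem_unitaryGroup_iff.mpr fun i => diagonal_mem_unitaryGroup_iff.mp hW _
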